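/- arXiv:2411.06243 — 8 statements merged into one kernel-verified Lean document; each statement's English description precedes it below -/
import Mathlib

section
/- Let n be a positive integer and ε a real number with 0 ≤ ε < n/2. For every nonnegative integer σ and every σ-bit training/inference pair (ρ, f̂) for datasets in [0,1]^n with query domain [0,1], there exists a dataset D ∈ [0,1]^n such that sup_{q ∈ [0,1]} |f̂(ρ(D))(q) − r_D(q)| > ε. -/
/-!
Constant datasets `(t, …, t)` with `t ∈ [0,1]` are infinitely many, while there are only `2^σ`
codes, so two of them, `t < s`, share a code and hence the same model. At the query `q = t` the
true ranks are `n` and `0`, and no single prediction lies within `ε < n/2` of both.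
-/

/-- The rank function of a dataset `D ∈ [0,1]^n`: `r_D(q) = Σ_i 1[D_i ≤ q]`. -/
noncomputable def rank {n : ℕ} (D : Fin n → ℝ) (q : ℝ) : ℝ :=
  ∑ i, if D i ≤ q then 1 else 0

lemma rank_const (n : ℕ) (t q : ℝ) :
    rank (fun _ : Fin n => t) q = if t ≤ q then (n : ℝ) else 0 := by
  split_ifs with h <;> simp [rank, h]

lemma lt_abs_sub_or_lt_abs_sub {a b c ε : ℝ} (h : 2 * ε < |b - c|) :
    ε < |a - b| ∨ ε < |a - c| := by
  by_contra! hle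
  have := abs_sub_le b a c
  rw [abs_sub_comm b a] at this
  linarith [hle.1, hle.2]

theorem stmt_3_general (n : ℕ) (ε : ℝ) (hε2 : ε < (n : ℝ) / 2)
    (σ : ℕ)
    (ρ : (Fin n → ℝ) → (Fin σ → Bool)) (fhat : (Fin σ → Bool) → (ℝ → ℝ)) :
    ∃ D : Fin n → ℝ, (∀ i, D i ∈ Set.Icc (0 : ℝ) 1) ∧
      ∃ q ∈ Set.Icc (0 : ℝ) 1, |fhat (ρ D) q - rank D q| > ε := by
  obtain ⟨x, hx, y, hy, hxy, hcode⟩ :=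
    (Set.Icc_infinite (zero_lt_one' ℝ)).exists_lt_map_eq_of_mapsTo
      (f := fun t => ρ fun _ => t) (Set.mapsTo_univ _ _) Set.finite_univ
  have hgap : 2 * ε < |rank (fun _ : Fin n => x) x - rank (fun _ : Fin n => y) x| := by
    rw [rank_const, rank_const, if_pos le_rfl, if_neg (not_le.mpr hxy), sub_zero,
      abs_of_nonneg n.cast_nonneg]
    linarith
  rcases lt_abs_sub_or_lt_abs_sub (a := fhat (ρ fun _ => x) x) hgap with h | h
  · exact ⟨_, fun _ => hx, x, hx, h⟩
  · exact ⟨_, fun _ => hy, x, hx, by simpa only [hcode] using h⟩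

/-- no finite-size model can guarantee worst-case error below `n/2`
for learned indexing over real-valued datasets. -/
theorem stmt_3 (n : ℕ) (hn : 0 < n) (ε : ℝ) (hε1 : 0 ≤ ε) (hε2 : ε < (n : ℝ) / 2)
    (σ : ℕ)
    (ρ : (Fin n → ℝ) → (Fin σ → Bool)) (fhat : (Fin σ → Bool) → (ℝ → ℝ)) :
    ∃ D : Fin n → ℝ, (∀ i, D i ∈ Set.Icc (0 : ℝ) 1) ∧
      ∃ q ∈ Set.Icc (0 : ℝ) 1, |fhat (ρ D) q - rank D q| > ε :=
  stmt_3_general n ε hε2 σ ρ fhat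
end

section
/- Let n be a positive integer and ε a real number with 0 < ε ≤ n. There exist a nonnegative integer σ ≤ ⌈n·log₂(e + e/ε + e/n)⌉ and a σ-bit training/inference pair (ρ, f̂) for datasets in [0,1]^n with query domain [0,1] such that for every dataset D ∈ [0,1]^n, ∫_0^1 |f̂(ρ(D))(q) − r_D(q)| dq ≤ ε. -/
/-!
Round every data point to the centre of its bucket among `m = ⌊n / (2ε)⌋₊ + 1` equal buckets
of `[0,1]`. Since `∫ |1[a ≤ q] - 1[b ≤ q]| dq = |a - b|`, the rank function of the rounded dataset
is within `n / (2m) ≤ ε` of `r_D` in `L¹`. It depends only on the multiset of bucket indices, and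
there are `(m + n - 1).choose n ≤ (e (m + n - 1) / n) ^ n ≤ (e + e/ε + e/n) ^ n` such multisets,
so `⌈n log₂ (e + e/ε + e/n)⌉` bits suffice to store it.
-/

open MeasureTheory

lemma ofReal_abs_ite_sub_ite_eq_indicator (a b q : ℝ) :
    ENNReal.ofReal |(if a ≤ q then 1 else 0) - (if b ≤ q then 1 else 0)| =
      (Set.Ico (min a b) (max a b)).indicator 1 q := by
  simp only [Set.indicator_apply, Set.mem_Ico, min_le_iff, lt_max_iff, Pi.one_apply]
  split_ifs <;> simp <;> grind

lemma lintegral_ofReal_abs_ite_sub_ite (a b : ℝ) :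
    ∫⁻ q, ENNReal.ofReal |(if a ≤ q then 1 else 0) - (if b ≤ q then 1 else 0)| =
      ENNReal.ofReal |a - b| := by
  simp_rw [ofReal_abs_ite_sub_ite_eq_indicator]
  rw [lintegral_indicator_one measurableSet_Ico, Real.volume_Ico, max_sub_min_eq_abs']

lemma lintegral_ofReal_abs_rank_sub_rank_le {n : ℕ} (D D' : Fin n → ℝ) :
    ∫⁻ q, ENNReal.ofReal |rank D q - rank D' q| ≤ ENNReal.ofReal (∑ i, |D i - D' i|) := by
  have hpoint (q : ℝ) : ENNReal.ofReal |rank D q - rank D' q| ≤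
      ∑ i, ENNReal.ofReal |(if D i ≤ q then 1 else 0) - (if D' i ≤ q then 1 else 0)| := by
    rw [← ENNReal.ofReal_sum_of_nonneg fun i _ => abs_nonneg _, rank, rank,
      ← Finset.sum_sub_distrib]
    exact ENNReal.ofReal_le_ofReal (Finset.abs_sum_le_sum_abs _ _)
  have hmeas (i : Fin n) : Measurable fun q : ℝ =>
      ENNReal.ofReal |(if D i ≤ q then 1 else 0) - (if D' i ≤ q then 1 else 0)| := by
    simp_rw [ofReal_abs_ite_sub_ite_eq_indicator]
    exact measurable_one.indicator measurableSet_Ico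
  calc ∫⁻ q, ENNReal.ofReal |rank D q - rank D' q|
      ≤ ∫⁻ q, ∑ i, ENNReal.ofReal |(if D i ≤ q then 1 else 0) - (if D' i ≤ q then 1 else 0)| :=
        lintegral_mono hpoint
    _ = ∑ i, ENNReal.ofReal |D i - D' i| := by
        rw [lintegral_finsetSum _ fun i _ => hmeas i]
        simp_rw [lintegral_ofReal_abs_ite_sub_ite]
    _ = ENNReal.ofReal (∑ i, |D i - D' i|) :=
        (ENNReal.ofReal_sum_of_nonneg fun i _ => abs_nonneg _).symm

lemma choose_le_exp_one_mul_div_pow (N k : ℕ) :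
    (N.choose k : ℝ) ≤ (Real.exp 1 * N / k) ^ k := by
  rcases k.eq_zero_or_pos with rfl | hk
  · simp
  have hkk : (k : ℝ) ^ k ≤ Real.exp 1 ^ k * k.factorial := by
    rw [Real.exp_one_pow, ← div_le_iff₀ (by positivity)]
    exact Real.pow_div_factorial_le_exp _ (Nat.cast_nonneg k) k
  calc (N.choose k : ℝ) ≤ (N : ℝ) ^ k / k.factorial := Nat.choose_le_pow_div k N
    _ ≤ (Real.exp 1 * N / k) ^ k := by
      rw [div_pow, mul_pow, div_le_div_iff₀ (by positivity) (by positivity)]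
      calc (N : ℝ) ^ k * k ^ k ≤ N ^ k * (Real.exp 1 ^ k * k.factorial) := by gcongr
        _ = _ := by ring

lemma le_pow_natCeil_logb {b x : ℝ} (hb : 1 < b) (hx : 0 < x) : x ≤ b ^ ⌈Real.logb b x⌉₊ := by
  calc x = b ^ Real.logb b x := (Real.rpow_logb (by linarith) hb.ne' hx).symm
    _ ≤ b ^ (⌈Real.logb b x⌉₊ : ℝ) := Real.rpow_le_rpow_of_exponent_le hb.le (Nat.le_ceil _)
    _ = b ^ ⌈Real.logb b x⌉₊ := Real.rpow_natCast b _

lemma exists_leftInverse_of_card_le {α : Type*} [Fintype α] [Nonempty α] {σ : ℕ}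
    (h : Fintype.card α ≤ 2 ^ σ) :
    ∃ (enc : α → Fin σ → Bool) (dec : (Fin σ → Bool) → α), Function.LeftInverse dec enc := by
  obtain ⟨enc⟩ := Function.Embedding.nonempty_of_card_le (β := Fin σ → Bool) (by simpa using h)
  exact ⟨enc, Function.invFun enc, Function.leftInverse_invFun enc.injective⟩

-- The `min` puts `x = 1` into the last bucket.
noncomputable def bucket (m : ℕ) [NeZero m] (x : ℝ) : Fin m :=
  ⟨min ⌊x * m⌋₊ (m - 1), (min_le_right _ _).trans_lt (Nat.sub_one_lt (NeZero.ne m))⟩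

noncomputable def bucketCenter (m : ℕ) (j : Fin m) : ℝ := (j + 1 / 2) / m

lemma bucket_le_mul_le_bucket_add_one (m : ℕ) [NeZero m] {x : ℝ} (hx : x ∈ Set.Icc 0 1) :
    (bucket m x : ℝ) ≤ x * m ∧ x * m ≤ bucket m x + 1 := by
  have hm : (1 : ℝ) ≤ m := by exact_mod_cast Nat.one_le_iff_ne_zero.2 (NeZero.ne m)
  simp only [bucket, Nat.cast_min]
  constructor
  · exact (min_le_left _ _).trans (Nat.floor_le (by nlinarith [hx.1]))
  · rw [← min_add_add_right, le_min_iff, Nat.cast_sub (by exact_mod_cast hm), Nat.cast_one]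
    exact ⟨(Nat.lt_floor_add_one _).le, by nlinarith [hx.2]⟩

lemma abs_bucketCenter_bucket_sub_le (m : ℕ) [NeZero m] {x : ℝ} (hx : x ∈ Set.Icc 0 1) :
    |bucketCenter m (bucket m x) - x| ≤ 1 / (2 * m) := by
  have hm : (0 : ℝ) < m := by exact_mod_cast Nat.pos_of_ne_zero (NeZero.ne m)
  obtain ⟨hlow, hhigh⟩ := bucket_le_mul_le_bucket_add_one m hx
  have hnum : |(bucket m x + 1 / 2) - x * m| ≤ 1 / 2 := abs_le.2 ⟨by linarith, by linarith⟩
  calc |bucketCenter m (bucket m x) - x| = |(bucket m x + 1 / 2) - x * m| / m := by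
        rw [bucketCenter, ← abs_of_pos hm, ← abs_div, abs_of_pos hm, sub_div,
          mul_div_cancel_right₀ _ hm.ne']
    _ ≤ 1 / 2 / m := by gcongr
    _ = 1 / (2 * m) := by rw [div_div]

noncomputable def multisetRank (s : Multiset ℝ) (q : ℝ) : ℝ :=
  (s.map fun x => if x ≤ q then 1 else 0).sum

lemma rank_eq_multisetRank {n : ℕ} (D : Fin n → ℝ) :
    rank D = multisetRank (Finset.univ.val.map D) := by
  ext q
  simp only [rank, multisetRank, Multiset.map_map]
  rfl

noncomputable def quantize (m : ℕ) [NeZero m] {n : ℕ} (D : Fin n → ℝ) : Sym (Fin m) n :=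
  ⟨Finset.univ.val.map (bucket m ∘ D), by simp⟩

lemma multisetRank_map_bucketCenter_quantize (m : ℕ) [NeZero m] {n : ℕ} (D : Fin n → ℝ) :
    multisetRank ((quantize m D : Multiset (Fin m)).map (bucketCenter m)) =
      rank (bucketCenter m ∘ bucket m ∘ D) := by
  rw [rank_eq_multisetRank, quantize, Sym.coe_mk, Multiset.map_map]

lemma card_sym_fin_succ_le (k n : ℕ) :
    (Fintype.card (Sym (Fin (k + 1)) n) : ℝ) ≤ (Real.exp 1 * (k + n) / n) ^ n := by
  rw [Sym.card_sym_eq_choose, Fintype.card_fin, Nat.add_right_comm, Nat.add_sub_cancel]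
  exact_mod_cast choose_le_exp_one_mul_div_pow (k + n) n

lemma exp_one_mul_floor_add_div_le (n : ℕ) {ε : ℝ} (hε : 0 < ε) :
    Real.exp 1 * (⌊n / (2 * ε)⌋₊ + n) / n ≤ Real.exp 1 + Real.exp 1 / ε + Real.exp 1 / n := by
  rcases n.eq_zero_or_pos with rfl | hn
  · simp only [CharP.cast_eq_zero, div_zero]; positivity
  have hn' : (0 : ℝ) < n := Nat.cast_pos.2 hn
  have hfloor : (⌊n / (2 * ε)⌋₊ : ℝ) / n ≤ 1 / ε := by
    rw [div_le_iff₀ hn', one_div_mul_eq_div]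
    calc (⌊n / (2 * ε)⌋₊ : ℝ) ≤ n / (2 * ε) := Nat.floor_le (by positivity)
      _ ≤ n / ε := div_le_div_of_nonneg_left hn'.le hε (by linarith)
  calc Real.exp 1 * (⌊n / (2 * ε)⌋₊ + n) / n = Real.exp 1 * ((⌊n / (2 * ε)⌋₊ : ℝ) / n + 1) := by
        field_simp
    _ ≤ Real.exp 1 * (1 / ε + 1) := by gcongr
    _ ≤ Real.exp 1 + Real.exp 1 / ε + Real.exp 1 / n := by
        have : 0 ≤ Real.exp 1 / n := by positivity
        rw [mul_add, mul_one_div]; linarith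

lemma div_two_mul_floor_add_one_le (n : ℕ) {ε : ℝ} (hε : 0 < ε) :
    (n : ℝ) / (2 * (⌊n / (2 * ε)⌋₊ + 1 : ℕ)) ≤ ε := by
  have h := Nat.lt_floor_add_one ((n : ℝ) / (2 * ε))
  rw [div_lt_iff₀ (by positivity)] at h
  rw [div_le_iff₀ (by positivity)]
  push_cast
  linarith

lemma lintegral_ofReal_abs_rank_rounded_sub_rank_le (m : ℕ) [NeZero m] {n : ℕ} {D : Fin n → ℝ}
    (hD : ∀ i, D i ∈ Set.Icc (0 : ℝ) 1) :
    ∫⁻ q, ENNReal.ofReal |rank (bucketCenter m ∘ bucket m ∘ D) q - rank D q| ≤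
      ENNReal.ofReal (n / (2 * m)) := by
  calc _ ≤ ENNReal.ofReal (∑ i, |bucketCenter m (bucket m (D i)) - D i|) :=
        lintegral_ofReal_abs_rank_sub_rank_le _ _
    _ ≤ ENNReal.ofReal (∑ _i : Fin n, 1 / (2 * m)) := by
        gcongr with i
        exact abs_bucketCenter_bucket_sub_le m (hD i)
    _ = ENNReal.ofReal (n / (2 * m)) := by
        rw [Finset.sum_const, Finset.card_univ, Fintype.card_fin, nsmul_eq_mul, mul_one_div]

lemma card_sym_fin_floor_succ_le_two_pow (n : ℕ) {ε : ℝ} (hε : 0 < ε) :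
    Fintype.card (Sym (Fin (⌊n / (2 * ε)⌋₊ + 1)) n) ≤
      2 ^ ⌈n * Real.logb 2 (Real.exp 1 + Real.exp 1 / ε + Real.exp 1 / n)⌉₊ := by
  set A := Real.exp 1 + Real.exp 1 / ε + Real.exp 1 / n
  suffices (Fintype.card (Sym (Fin (⌊n / (2 * ε)⌋₊ + 1)) n) : ℝ) ≤ 2 ^ ⌈n * Real.logb 2 A⌉₊ by
    exact_mod_cast this
  calc _ ≤ (Real.exp 1 * (⌊n / (2 * ε)⌋₊ + n) / n) ^ n := card_sym_fin_succ_le _ n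
    _ ≤ A ^ n := by gcongr; exact exp_one_mul_floor_add_div_le n hε
    _ ≤ 2 ^ ⌈Real.logb 2 (A ^ n)⌉₊ := le_pow_natCeil_logb one_lt_two (by positivity)
    _ = 2 ^ ⌈n * Real.logb 2 A⌉₊ := by rw [Real.logb_pow]

theorem stmt_5_general (n : ℕ) (ε : ℝ) (hε1 : 0 < ε) :
    ∃ σ : ℕ, (σ : ℤ) ≤
      ⌈(n : ℝ) * Real.logb 2 (Real.exp 1 + Real.exp 1 / ε + Real.exp 1 / (n : ℝ))⌉ ∧
    ∃ (ρ : (Fin n → ℝ) → (Fin σ → Bool)) (fhat : (Fin σ → Bool) → (ℝ → ℝ)),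
      ∀ D : Fin n → ℝ, (∀ i, D i ∈ Set.Icc (0 : ℝ) 1) →
        ∫⁻ q in Set.Icc (0 : ℝ) 1, ENNReal.ofReal |fhat (ρ D) q - rank D q| ≤
          ENNReal.ofReal ε := by
  have hA : 1 ≤ Real.exp 1 + Real.exp 1 / ε + Real.exp 1 / n := by
    have := Real.add_one_le_exp 1
    have : 0 ≤ Real.exp 1 / n := by positivity
    have : 0 ≤ Real.exp 1 / ε := by positivity
    linarith
  set m := ⌊n / (2 * ε)⌋₊ + 1
  obtain ⟨enc, dec, hdec⟩ :=
    exists_leftInverse_of_card_le (card_sym_fin_floor_succ_le_two_pow n hε1)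
  refine ⟨_, (Int.natCast_ceil_eq_ceil
    (mul_nonneg n.cast_nonneg (Real.logb_nonneg one_lt_two hA))).le, enc ∘ quantize m,
    fun b => multisetRank ((dec b : Multiset (Fin m)).map (bucketCenter m)), fun D hD => ?_⟩
  simp only [Function.comp_apply, hdec _, multisetRank_map_bucketCenter_quantize]
  calc _ ≤ ∫⁻ q, ENNReal.ofReal |rank (bucketCenter m ∘ bucket m ∘ D) q - rank D q| :=
        setLIntegral_le_lintegral _ _
    _ ≤ ENNReal.ofReal (n / (2 * m)) := lintegral_ofReal_abs_rank_rounded_sub_rank_le m hD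
    _ ≤ ENNReal.ofReal ε := ENNReal.ofReal_le_ofReal (div_two_mul_floor_add_one_le n hε1)

/-- upper bound on the required model size for average-case (1-norm)
error in learned indexing. -/
theorem stmt_5 (n : ℕ) (hn : 0 < n) (ε : ℝ) (hε1 : 0 < ε) (hε2 : ε ≤ (n : ℝ)) :
    ∃ σ : ℕ, (σ : ℤ) ≤
      ⌈(n : ℝ) * Real.logb 2 (Real.exp 1 + Real.exp 1 / ε + Real.exp 1 / (n : ℝ))⌉ ∧
    ∃ (ρ : (Fin n → ℝ) → (Fin σ → Bool)) (fhat : (Fin σ → Bool) → (ℝ → ℝ)),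
      ∀ D : Fin n → ℝ, (∀ i, D i ∈ Set.Icc (0 : ℝ) 1) →
        ∫⁻ q in Set.Icc (0 : ℝ) 1, ENNReal.ofReal |fhat (ρ D) q - rank D q| ≤
          ENNReal.ofReal ε :=
  stmt_5_general n ε hε1
end

section
/- Let μ be a nonatomic (continuous) Borel probability measure on [0,1], n a positive integer, and ε a real number with 0 < ε ≤ n. There exist a nonnegative integer σ ≤ ⌈n·log₂(e + e/ε + e/n)⌉ and a σ-bit training/inference pair (ρ, f̂) for datasets in [0,1]^n with query domain [0,1] such that for every dataset D ∈ [0,1]^n, ∫_{[0,1]} |f̂(ρ(D))(q) − r_D(q)| dμ(q) ≤ ε. -/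
/-!
Quantize each data point `x` by the bucket `j = ⌊k F(x)⌋` of its cdf value `F(x) = μ(-∞, x]`,
`k = ⌈n/ε⌉`, and predict `1[D_i ≤ q]` by `1[(j + 1)/k ≤ F(q)]`. The prediction can only be wrong
when `F(q)` falls in the bucket `[j/k, (j+1)/k)`, which for a nonatomic `μ` has mass at most
`1/k`; hence the total error is at most `n/k ≤ ε`. The prediction only depends on the multiset
of buckets, and there are `C(k+n, n) ≤ (e(k+n)/n)^n ≤ (e + e/ε + e/n)^n` of those.
-/

open MeasureTheory

open Set ProbabilityTheory Real
open scoped ENNReal Nat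

theorem Nat.choose_le_exp_one_mul_div_pow (m n : ℕ) :
    (m.choose n : ℝ) ≤ (exp 1 * m / n) ^ n := by
  calc (m.choose n : ℝ) ≤ (m : ℝ) ^ n / n ! := Nat.choose_le_pow_div n m
    _ = (m : ℝ) ^ n / (n : ℝ) ^ n * ((n : ℝ) ^ n / n !) := by field_simp
    _ ≤ (m : ℝ) ^ n / (n : ℝ) ^ n * exp n := by
        gcongr; exact pow_div_factorial_le_exp _ n.cast_nonneg n
    _ = (exp 1 * m / n) ^ n := by rw [← exp_one_pow, div_pow, mul_pow]; ring

theorem pow_le_two_pow_ceil_mul_logb {B : ℝ} (hB : 0 < B) (n : ℕ) :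
    B ^ n ≤ (2 : ℝ) ^ ⌈n * logb 2 B⌉₊ := by
  calc B ^ n = (2 : ℝ) ^ (logb 2 B * n) := by
        rw [rpow_mul_natCast zero_le_two, rpow_logb two_pos (by norm_num) hB]
    _ ≤ (2 : ℝ) ^ (⌈n * logb 2 B⌉₊ : ℝ) :=
        rpow_le_rpow_of_exponent_le one_le_two (by rw [mul_comm]; exact Nat.le_ceil _)
    _ = (2 : ℝ) ^ ⌈n * logb 2 B⌉₊ := rpow_natCast _ _

theorem exists_bits_encode_decode {X α Y : Type*} [Fintype α] [Nonempty α] {σ : ℕ}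
    (hα : Fintype.card α ≤ 2 ^ σ) (enc : X → α) (dec : α → Y) :
    ∃ (ρ : X → (Fin σ → Bool)) (fhat : (Fin σ → Bool) → Y), ∀ x, fhat (ρ x) = dec (enc x) := by
  obtain ⟨e⟩ := Function.Embedding.nonempty_of_card_le (β := Fin σ → Bool) (by simpa using hα)
  exact ⟨e ∘ enc, dec ∘ Function.invFun e,
    fun x => congrArg dec (Function.leftInverse_invFun e.injective (enc x))⟩

theorem measure_cdf_preimage_Ico_le (μ : Measure ℝ) [IsProbabilityMeasure μ]
    [NullSingletonClass μ] (a b : ℝ) : μ (cdf μ ⁻¹' Ico a b) ≤ ENNReal.ofReal (b - a) := by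
  -- By inner regularity it suffices to bound a compact `K` in the band; `K ⊆ [min K, max K]`
  -- and both endpoints lie in the band.
  by_contra! h
  obtain ⟨K, hKS, hK, hbK⟩ := ((monotone_cdf μ).measurable measurableSet_Ico)
    |>.exists_lt_isCompact_of_ne_top (measure_ne_top μ _) h
  have hKne : K.Nonempty := nonempty_of_measure_ne_zero (ne_bot_of_gt hbK)
  have hlo := hKS (hK.sInf_mem hKne)
  have hhi := hKS (hK.sSup_mem hKne)
  have : μ K ≤ ENNReal.ofReal (b - a) := calc
    μ K ≤ μ (Icc (sInf K) (sSup K)) :=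
        measure_mono fun x hx => ⟨csInf_le hK.bddBelow hx, le_csSup hK.bddAbove hx⟩
    _ = μ (Ioc (sInf K) (sSup K)) := (measure_congr Ioc_ae_eq_Icc).symm
    _ = ENNReal.ofReal (cdf μ (sSup K) - cdf μ (sInf K)) := by
        conv_lhs => rw [← measure_cdf μ]
        exact (cdf μ).measure_Ioc _ _
    _ ≤ ENNReal.ofReal (b - a) := ENNReal.ofReal_le_ofReal (by linarith [hlo.1, hhi.2])
  exact (hbK.trans_le this).false

theorem ofReal_abs_ite_sub_ite_le_indicator {F : ℝ → ℝ} (hF : Monotone F) {x l u : ℝ}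
    (hl : l ≤ F x) (hu : F x < u) (q : ℝ) :
    ENNReal.ofReal |(if u ≤ F q then (1 : ℝ) else 0) - (if x ≤ q then 1 else 0)| ≤
      (F ⁻¹' Ico l u).indicator 1 q := by
  by_cases hq : q ∈ F ⁻¹' Ico l u
  · rw [indicator_of_mem hq, Pi.one_apply, ENNReal.ofReal_le_one]
    split_ifs <;> norm_num
  · rw [indicator_of_notMem hq]
    have hq' : F q < l ∨ u ≤ F q := by
      simpa only [mem_preimage, mem_Ico, not_and_or, not_le, not_lt] using hq
    by_cases hxq : x ≤ q
    · have : u ≤ F q := hq'.resolve_left (hl.trans (hF hxq)).not_gt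
      simp [this, hxq]
    · have : ¬ u ≤ F q := (hF (le_of_not_ge hxq)).trans_lt hu |>.not_ge
      simp [this, hxq]

theorem lintegral_abs_sum_ite_sub_rank_le {n : ℕ} {F : ℝ → ℝ} (hF : Monotone F)
    (μ : Measure ℝ) (D l u : Fin n → ℝ) (hl : ∀ i, l i ≤ F (D i)) (hu : ∀ i, F (D i) < u i) :
    ∫⁻ q, ENNReal.ofReal |(∑ i, if u i ≤ F q then (1 : ℝ) else 0) - rank D q| ∂μ ≤
      ∑ i, μ (F ⁻¹' Ico (l i) (u i)) := by
  have hmeas : ∀ i, MeasurableSet (F ⁻¹' Ico (l i) (u i)) :=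
    fun i => hF.measurable measurableSet_Ico
  calc ∫⁻ q, ENNReal.ofReal |(∑ i, if u i ≤ F q then (1 : ℝ) else 0) - rank D q| ∂μ
      ≤ ∫⁻ q, ∑ i, (F ⁻¹' Ico (l i) (u i)).indicator 1 q ∂μ := by
        refine lintegral_mono fun q => ?_
        rw [rank, ← Finset.sum_sub_distrib]
        calc _ ≤ ENNReal.ofReal (∑ i, |(if u i ≤ F q then (1 : ℝ) else 0) -
                (if D i ≤ q then 1 else 0)|) :=
              ENNReal.ofReal_le_ofReal (Finset.abs_sum_le_sum_abs _ _)
          _ = ∑ i, ENNReal.ofReal |(if u i ≤ F q then (1 : ℝ) else 0) -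
                (if D i ≤ q then 1 else 0)| :=
              ENNReal.ofReal_sum_of_nonneg fun i _ => abs_nonneg _
          _ ≤ _ := Finset.sum_le_sum fun i _ =>
              ofReal_abs_ite_sub_ite_le_indicator hF (hl i) (hu i) q
    _ = ∑ i, μ (F ⁻¹' Ico (l i) (u i)) := by
        rw [lintegral_finsetSum _ fun i _ => measurable_one.indicator (hmeas i)]
        simp only [lintegral_indicator_one (hmeas _)]

noncomputable def cdfBucket (μ : Measure ℝ) [IsProbabilityMeasure μ] (k : ℕ) (x : ℝ) :
    Fin (k + 1) :=
  ⟨⌊k * cdf μ x⌋₊, Nat.lt_succ_of_le <| Nat.floor_le_of_le <|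
    mul_le_of_le_one_right k.cast_nonneg (cdf_le_one μ x)⟩

theorem cdfBucket_div_le_cdf (μ : Measure ℝ) [IsProbabilityMeasure μ] (k : ℕ) (x : ℝ) :
    ((cdfBucket μ k x : ℕ) : ℝ) / k ≤ cdf μ x :=
  div_le_of_le_mul₀ k.cast_nonneg (cdf_nonneg μ x) <| by
    rw [mul_comm]; exact Nat.floor_le (mul_nonneg k.cast_nonneg (cdf_nonneg μ x))

theorem cdf_lt_cdfBucket_add_one_div (μ : Measure ℝ) [IsProbabilityMeasure μ] {k : ℕ}
    (hk : 0 < k) (x : ℝ) : cdf μ x < (((cdfBucket μ k x : ℕ) : ℝ) + 1) / k := by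
  rw [lt_div_iff₀ (by exact_mod_cast hk), mul_comm]
  exact Nat.lt_floor_add_one _

noncomputable def cdfBuckets (μ : Measure ℝ) [IsProbabilityMeasure μ] (k : ℕ) {n : ℕ}
    (D : Fin n → ℝ) : Sym (Fin (k + 1)) n :=
  ⟨Finset.univ.val.map (cdfBucket μ k ∘ D), by simp⟩

noncomputable def bucketRank (μ : Measure ℝ) (k : ℕ) {n : ℕ} (s : Sym (Fin (k + 1)) n)
    (q : ℝ) : ℝ :=
  ((s : Multiset (Fin (k + 1))).map fun j : Fin (k + 1) =>
    if ((j : ℕ) + 1 : ℝ) / k ≤ cdf μ q then 1 else 0).sum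

theorem bucketRank_cdfBuckets (μ : Measure ℝ) [IsProbabilityMeasure μ] (k : ℕ) {n : ℕ}
    (D : Fin n → ℝ) (q : ℝ) :
    bucketRank μ k (cdfBuckets μ k D) q =
      ∑ i, if (((cdfBucket μ k (D i) : ℕ) : ℝ) + 1) / k ≤ cdf μ q then 1 else 0 := by
  simp only [bucketRank, cdfBuckets, Sym.coe_mk, Multiset.map_map, Finset.sum_eq_multiset_sum]
  rfl

theorem lintegral_abs_bucketRank_sub_rank_le (μ : Measure ℝ) [IsProbabilityMeasure μ]
    [NullSingletonClass μ] {k n : ℕ} (hk : 0 < k) (D : Fin n → ℝ) :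
    ∫⁻ q, ENNReal.ofReal |bucketRank μ k (cdfBuckets μ k D) q - rank D q| ∂μ ≤
      ENNReal.ofReal (n / k) := by
  simp only [bucketRank_cdfBuckets]
  calc _ ≤ ∑ i, μ (cdf μ ⁻¹' Ico (((cdfBucket μ k (D i) : ℕ) : ℝ) / k)
          ((((cdfBucket μ k (D i) : ℕ) : ℝ) + 1) / k)) :=
        lintegral_abs_sum_ite_sub_rank_le (monotone_cdf μ) μ D _ _
          (fun i => cdfBucket_div_le_cdf μ k (D i))
          (fun i => cdf_lt_cdfBucket_add_one_div μ hk (D i))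
    _ ≤ ∑ _i : Fin n, ENNReal.ofReal (1 / k) := Finset.sum_le_sum fun i _ =>
        (measure_cdf_preimage_Ico_le μ _ _).trans_eq (by rw [← sub_div, add_sub_cancel_left])
    _ = ENNReal.ofReal (n / k) := by
        rw [Finset.sum_const, Finset.card_univ, Fintype.card_fin, nsmul_eq_mul,
          ← ENNReal.ofReal_natCast, ← ENNReal.ofReal_mul n.cast_nonneg, mul_one_div]

theorem card_sym_fin_ceil_div_le {n : ℕ} (hn : 0 < n) {ε : ℝ} (hε : 0 < ε) :
    (Fintype.card (Sym (Fin (⌈n / ε⌉₊ + 1)) n) : ℝ) ≤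
      (exp 1 + exp 1 / ε + exp 1 / n) ^ n := by
  rw [Sym.card_sym_eq_choose, Fintype.card_fin, add_right_comm, Nat.add_sub_cancel]
  refine (Nat.choose_le_exp_one_mul_div_pow _ n).trans (pow_le_pow_left₀ (by positivity) ?_ n)
  have hnR : (0 : ℝ) < n := by exact_mod_cast hn
  rw [div_le_iff₀ hnR]
  calc exp 1 * ((⌈n / ε⌉₊ + n : ℕ) : ℝ) ≤ exp 1 * (n / ε + 1 + n) := by
        push_cast; gcongr; exact (Nat.ceil_lt_add_one (by positivity)).le
    _ = (exp 1 + exp 1 / ε + exp 1 / n) * n := by field_simp; ring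

theorem stmt_11_general (μ : Measure ℝ) [IsProbabilityMeasure μ]
    (hatom : ∀ x : ℝ, μ {x} = 0)
    (n : ℕ) (hn : 0 < n) (ε : ℝ) (hε1 : 0 < ε) :
    ∃ σ : ℕ, (σ : ℤ) ≤
      ⌈(n : ℝ) * Real.logb 2 (Real.exp 1 + Real.exp 1 / ε + Real.exp 1 / (n : ℝ))⌉ ∧
    ∃ (ρ : (Fin n → ℝ) → (Fin σ → Bool)) (fhat : (Fin σ → Bool) → (ℝ → ℝ)),
      ∀ D : Fin n → ℝ, (∀ i, D i ∈ Set.Icc (0 : ℝ) 1) →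
        ∫⁻ q in Set.Icc (0 : ℝ) 1, ENNReal.ofReal |fhat (ρ D) q - rank D q| ∂μ ≤
          ENNReal.ofReal ε := by
  have : NullSingletonClass μ := ⟨hatom⟩
  set k := ⌈(n : ℝ) / ε⌉₊
  have hk : 0 < k := Nat.ceil_pos.2 (by positivity)
  set B := exp 1 + exp 1 / ε + exp 1 / n
  have hB : 1 ≤ B := by
    have : 0 < exp 1 / ε + exp 1 / n := by positivity
    linarith [add_one_le_exp 1]
  have hcard : Fintype.card (Sym (Fin (k + 1)) n) ≤ 2 ^ ⌈n * logb 2 B⌉₊ := by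
    exact_mod_cast (card_sym_fin_ceil_div_le hn hε1).trans
      (pow_le_two_pow_ceil_mul_logb (by positivity) n)
  obtain ⟨ρ, fhat, hρ⟩ := exists_bits_encode_decode hcard (cdfBuckets μ k) (bucketRank μ k)
  refine ⟨_, (Int.natCast_ceil_eq_ceil (mul_nonneg n.cast_nonneg
    (logb_nonneg one_lt_two hB))).le, ρ, fhat, fun D _ => ?_⟩
  have hkR : (0 : ℝ) < k := by exact_mod_cast hk
  calc _ ≤ ∫⁻ q, ENNReal.ofReal |bucketRank μ k (cdfBuckets μ k D) q - rank D q| ∂μ := by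
        rw [hρ]; exact setLIntegral_le_lintegral _ _
    _ ≤ ENNReal.ofReal (n / k) := lintegral_abs_bucketRank_sub_rank_le μ hk D
    _ ≤ ENNReal.ofReal ε := ENNReal.ofReal_le_ofReal <|
        (div_le_iff₀ hkR).2 ((div_le_iff₀' hε1).1 (Nat.le_ceil _))

/-- upper bound on the required model size for average-case (μ-norm)
error in learned indexing, for an arbitrary nonatomic Borel probability measure `μ`
on `[0,1]`. -/
theorem stmt_11 (μ : Measure ℝ) [IsProbabilityMeasure μ]
    (hsupp : μ (Set.Icc (0 : ℝ) 1)ᶜ = 0) (hatom : ∀ x : ℝ, μ {x} = 0)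
    (n : ℕ) (hn : 0 < n) (ε : ℝ) (hε1 : 0 < ε) (hε2 : ε ≤ (n : ℝ)) :
    ∃ σ : ℕ, (σ : ℤ) ≤
      ⌈(n : ℝ) * Real.logb 2 (Real.exp 1 + Real.exp 1 / ε + Real.exp 1 / (n : ℝ))⌉ ∧
    ∃ (ρ : (Fin n → ℝ) → (Fin σ → Bool)) (fhat : (Fin σ → Bool) → (ℝ → ℝ)),
      ∀ D : Fin n → ℝ, (∀ i, D i ∈ Set.Icc (0 : ℝ) 1) →
        ∫⁻ q in Set.Icc (0 : ℝ) 1, ENNReal.ofReal |fhat (ρ D) q - rank D q| ∂μ ≤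
          ENNReal.ofReal ε :=
  stmt_11_general μ hatom n hn ε hε1
end

section
/- Let n be a positive integer and ε > 0 a real number. There exists a measurable probability density g on the query domain Q_c (with d = 1), i.e., g ≥ 0 and ∫_{Q_c} g = 1, such that for all datasets D, D' ∈ [0,1]^n, ∫_{Q_c} |c_D(q) − c_{D'}(q)|·g(q) dq ≤ ε. -/
/-!
Take `g` uniform on the queries of width `r ≤ δ`: this strip of `Q_c` has area `δ`, so `g = 1/δ`
there. A query `(c, r)` of width `r ≤ δ` contains a point `x` only if `c ∈ [x - δ, x]`, so each
point is counted with `g`-mass at most `δ · δ · (1/δ) = δ`, and `c_D` has `g`-mean at most `n δ`.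
Since `|c_D - c_D'| ≤ c_D + c_D'`, the choice `δ = min 1 (ε / (2 (n + 1)))` gives the bound `ε`.
-/

open MeasureTheory

/-- The query domain `Q_c` for 1-dimensional range queries: pairs `(c, r)` with
`r ∈ [0,1]` and `c ∈ [−r, 1−r]`. -/
def Qc1 : Set (ℝ × ℝ) :=
  {q | q.2 ∈ Set.Icc (0 : ℝ) 1 ∧ q.1 ∈ Set.Icc (-q.2) (1 - q.2)}

/-- The cardinality function of a 1-dimensional dataset:
`c_D(c, r) = Σ_i 1[c ≤ D_i ≤ c + r]`. -/
noncomputable def cardF1 {n : ℕ} (D : Fin n → ℝ) (q : ℝ × ℝ) : ℝ :=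
  ∑ i, if q.1 ≤ D i ∧ D i ≤ q.1 + q.2 then 1 else 0

open Set

def shortQueries (δ : ℝ) : Set (ℝ × ℝ) :=
  {q | q.2 ∈ Icc 0 δ ∧ q.1 ∈ Icc (-q.2) (1 - q.2)}

noncomputable def shortQueryDensity (δ : ℝ) : ℝ × ℝ → ℝ :=
  (shortQueries δ).indicator fun _ => δ⁻¹

lemma measurableSet_shortQueries (δ : ℝ) : MeasurableSet (shortQueries δ) := by
  unfold shortQueries
  measurability

lemma shortQueries_subset_Qc1 {δ : ℝ} (hδ : δ ≤ 1) : shortQueries δ ⊆ Qc1 :=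
  fun _ ⟨hr, hc⟩ => ⟨⟨hr.1, hr.2.trans hδ⟩, hc⟩

lemma volume_shortQueries (δ : ℝ) : volume (shortQueries δ) = ENNReal.ofReal δ := by
  have slice (r : ℝ) :
      volume ((fun c => (c, r)) ⁻¹' shortQueries δ) = (Icc 0 δ).indicator 1 r := by
    change volume {c | r ∈ Icc 0 δ ∧ c ∈ Icc (-r) (1 - r)} = _
    by_cases hr : r ∈ Icc 0 δ
    · simp only [hr, true_and, ofPred_mem_eq, Real.volume_Icc, indicator_of_mem, Pi.one_apply]
      norm_num
    · simp [hr]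
  rw [Measure.volume_eq_prod, Measure.prod_apply_symm (measurableSet_shortQueries δ)]
  simp_rw [slice]
  rw [lintegral_indicator_one measurableSet_Icc, Real.volume_Icc, sub_zero]

lemma ofReal_shortQueryDensity (δ : ℝ) (q : ℝ × ℝ) :
    ENNReal.ofReal (shortQueryDensity δ q) =
      (shortQueries δ).indicator (fun _ => ENNReal.ofReal δ⁻¹) q := by
  by_cases hq : q ∈ shortQueries δ <;> simp [shortQueryDensity, hq]

lemma lintegral_shortQueryDensity {δ : ℝ} (hδ : 0 < δ) :
    ∫⁻ q, ENNReal.ofReal (shortQueryDensity δ q) = 1 := by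
  simp_rw [ofReal_shortQueryDensity]
  rw [lintegral_indicator_const (measurableSet_shortQueries δ), volume_shortQueries δ,
    ← ENNReal.ofReal_mul (inv_nonneg.2 hδ.le), inv_mul_cancel₀ hδ.ne', ENNReal.ofReal_one]

noncomputable def queryContains (x : ℝ) (q : ℝ × ℝ) : ℝ :=
  if q.1 ≤ x ∧ x ≤ q.1 + q.2 then 1 else 0

lemma measurable_queryContains (x : ℝ) : Measurable (queryContains x) :=
  Measurable.ite (by measurability) measurable_const measurable_const

lemma queryContains_nonneg (x : ℝ) (q : ℝ × ℝ) : 0 ≤ queryContains x q := by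
  unfold queryContains; split_ifs <;> norm_num

lemma cardF1_eq_sum_queryContains {n : ℕ} (D : Fin n → ℝ) (q : ℝ × ℝ) :
    cardF1 D q = ∑ i, queryContains (D i) q := rfl

lemma measurable_cardF1 {n : ℕ} (D : Fin n → ℝ) : Measurable (cardF1 D) :=
  Finset.measurable_sum _ fun i _ => measurable_queryContains (D i)

lemma cardF1_nonneg {n : ℕ} (D : Fin n → ℝ) (q : ℝ × ℝ) : 0 ≤ cardF1 D q :=
  Finset.sum_nonneg fun i _ => queryContains_nonneg (D i) q

lemma shortQueryDensity_nonneg {δ : ℝ} (hδ : 0 ≤ δ) (q : ℝ × ℝ) : 0 ≤ shortQueryDensity δ q :=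
  indicator_nonneg (fun _ _ => inv_nonneg.2 hδ) q

lemma measurable_shortQueryDensity (δ : ℝ) : Measurable (shortQueryDensity δ) :=
  measurable_const.indicator (measurableSet_shortQueries δ)

lemma lintegral_queryContains_mul_shortQueryDensity_le {δ : ℝ} (hδ : 0 < δ) (x : ℝ) :
    ∫⁻ q, ENNReal.ofReal (queryContains x q * shortQueryDensity δ q) ≤ ENNReal.ofReal δ := by
  set s := {q : ℝ × ℝ | q.1 ≤ x ∧ x ≤ q.1 + q.2} ∩ shortQueries δ
  have hs : s ⊆ Icc (x - δ) x ×ˢ Icc 0 δ := fun q ⟨⟨hcx, hxr⟩, ⟨hr, _⟩⟩ =>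
    ⟨⟨by linarith [hr.2], hcx⟩, hr⟩
  have integrand (q : ℝ × ℝ) : ENNReal.ofReal (queryContains x q * shortQueryDensity δ q) =
      s.indicator (fun _ => ENNReal.ofReal δ⁻¹) q := by
    by_cases hq : q ∈ shortQueries δ <;> by_cases hx : q.1 ≤ x ∧ x ≤ q.1 + q.2 <;>
      simp [s, queryContains, shortQueryDensity, hq, hx]
  calc _ = ∫⁻ q, s.indicator (fun _ => ENNReal.ofReal δ⁻¹) q := by simp_rw [integrand]
    _ ≤ ENNReal.ofReal δ⁻¹ * volume s := lintegral_indicator_const_le s _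
    _ ≤ ENNReal.ofReal δ⁻¹ * (ENNReal.ofReal δ * ENNReal.ofReal δ) := by
      gcongr
      calc volume s ≤ volume (Icc (x - δ) x ×ˢ Icc 0 δ) := measure_mono hs
        _ = _ := by
          rw [Measure.volume_eq_prod, Measure.prod_prod, Real.volume_Icc, Real.volume_Icc]
          simp
    _ = ENNReal.ofReal δ := by
      rw [← mul_assoc, ← ENNReal.ofReal_mul (inv_nonneg.2 hδ.le), inv_mul_cancel₀ hδ.ne',
        ENNReal.ofReal_one, one_mul]

lemma lintegral_cardF1_mul_shortQueryDensity_le {δ : ℝ} (hδ : 0 < δ) {n : ℕ} (D : Fin n → ℝ) :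
    ∫⁻ q, ENNReal.ofReal (cardF1 D q * shortQueryDensity δ q) ≤ n * ENNReal.ofReal δ := by
  have hterm (i : Fin n) (q : ℝ × ℝ) : 0 ≤ queryContains (D i) q * shortQueryDensity δ q :=
    mul_nonneg (queryContains_nonneg _ q) (shortQueryDensity_nonneg hδ.le q)
  calc _ = ∫⁻ q, ∑ i, ENNReal.ofReal (queryContains (D i) q * shortQueryDensity δ q) := by
        simp_rw [cardF1_eq_sum_queryContains, Finset.sum_mul]
        exact lintegral_congr fun q => ENNReal.ofReal_sum_of_nonneg fun i _ => hterm i q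
    _ = ∑ i, ∫⁻ q, ENNReal.ofReal (queryContains (D i) q * shortQueryDensity δ q) :=
        lintegral_finsetSum _ fun i _ =>
          ((measurable_queryContains _).mul (measurable_shortQueryDensity δ)).ennreal_ofReal
    _ ≤ ∑ _i : Fin n, ENNReal.ofReal δ :=
        Finset.sum_le_sum fun i _ => lintegral_queryContains_mul_shortQueryDensity_le hδ (D i)
    _ = n * ENNReal.ofReal δ := by simp

lemma lintegral_abs_sub_cardF1_mul_shortQueryDensity_le {δ : ℝ} (hδ : 0 < δ) {n : ℕ}
    (D D' : Fin n → ℝ) :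
    ∫⁻ q, ENNReal.ofReal (|cardF1 D q - cardF1 D' q| * shortQueryDensity δ q) ≤
      ENNReal.ofReal (2 * n * δ) := by
  have hg := shortQueryDensity_nonneg hδ.le
  have hdiff (q : ℝ × ℝ) : ENNReal.ofReal (|cardF1 D q - cardF1 D' q| * shortQueryDensity δ q) ≤
      ENNReal.ofReal (cardF1 D q * shortQueryDensity δ q) +
        ENNReal.ofReal (cardF1 D' q * shortQueryDensity δ q) := by
    have hD := cardF1_nonneg D q
    have hD' := cardF1_nonneg D' q
    rw [← ENNReal.ofReal_add (mul_nonneg hD (hg q)) (mul_nonneg hD' (hg q)), ← add_mul]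
    exact ENNReal.ofReal_le_ofReal <|
      mul_le_mul_of_nonneg_right (abs_sub_le_iff.2 ⟨by linarith, by linarith⟩) (hg q)
  have hmeas : Measurable fun q => ENNReal.ofReal (cardF1 D q * shortQueryDensity δ q) :=
    ((measurable_cardF1 D).mul (measurable_shortQueryDensity δ)).ennreal_ofReal
  calc _ ≤ ∫⁻ q, ENNReal.ofReal (cardF1 D q * shortQueryDensity δ q) +
          ENNReal.ofReal (cardF1 D' q * shortQueryDensity δ q) := lintegral_mono hdiff
    _ ≤ n * ENNReal.ofReal δ + n * ENNReal.ofReal δ := by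
        rw [lintegral_add_left hmeas]
        exact add_le_add (lintegral_cardF1_mul_shortQueryDensity_le hδ D)
          (lintegral_cardF1_mul_shortQueryDensity_le hδ D')
    _ = ENNReal.ofReal (2 * n * δ) := by
        rw [← two_mul, ← mul_assoc, ← ENNReal.ofReal_natCast, ← ENNReal.ofReal_ofNat 2,
          ← ENNReal.ofReal_mul zero_le_two, ← ENNReal.ofReal_mul (by positivity)]

theorem stmt_12_general (n : ℕ) (ε : ℝ) (hε : 0 < ε) :
    ∃ g : ℝ × ℝ → ℝ, Measurable g ∧ (∀ q, 0 ≤ g q) ∧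
      (∫⁻ q in Qc1, ENNReal.ofReal (g q) = 1) ∧
      ∀ D D' : Fin n → ℝ, (∀ i, D i ∈ Set.Icc (0 : ℝ) 1) →
        (∀ i, D' i ∈ Set.Icc (0 : ℝ) 1) →
        ∫⁻ q in Qc1, ENNReal.ofReal (|cardF1 D q - cardF1 D' q| * g q) ≤
          ENNReal.ofReal ε := by
  set δ := min 1 (ε / (2 * (n + 1)))
  have hδ : 0 < δ := lt_min one_pos (by positivity)
  have hδε : 2 * n * δ ≤ ε := by
    have := min_le_right 1 (ε / (2 * (n + 1)))
    rw [le_div_iff₀ (by positivity)] at this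
    nlinarith
  refine ⟨shortQueryDensity δ, measurable_shortQueryDensity δ, shortQueryDensity_nonneg hδ.le,
    ?_, fun D D' _ _ => ?_⟩
  · rw [setLIntegral_eq_of_support_subset, lintegral_shortQueryDensity hδ]
    exact (Function.support_comp_subset ENNReal.ofReal_zero _).trans <|
      support_indicator_subset.trans (shortQueries_subset_Qc1 (min_le_left _ _))
  calc _ ≤ ∫⁻ q, ENNReal.ofReal (|cardF1 D q - cardF1 D' q| * shortQueryDensity δ q) :=
        setLIntegral_le_lintegral _ _
    _ ≤ ENNReal.ofReal (2 * n * δ) := lintegral_abs_sub_cardF1_mul_shortQueryDensity_le hδ D D'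
    _ ≤ ENNReal.ofReal ε := ENNReal.ofReal_le_ofReal hδε

/-- there is a query distribution under which all datasets have
arbitrarily close cardinality functions. -/
theorem stmt_12 (n : ℕ) (hn : 0 < n) (ε : ℝ) (hε : 0 < ε) :
    ∃ g : ℝ × ℝ → ℝ, Measurable g ∧ (∀ q, 0 ≤ g q) ∧
      (∫⁻ q in Qc1, ENNReal.ofReal (g q) = 1) ∧
      ∀ D D' : Fin n → ℝ, (∀ i, D i ∈ Set.Icc (0 : ℝ) 1) →
        (∀ i, D' i ∈ Set.Icc (0 : ℝ) 1) →
        ∫⁻ q in Qc1, ENNReal.ofReal (|cardF1 D q - cardF1 D' q| * g q) ≤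
          ENNReal.ofReal ε :=
  stmt_12_general n ε hε
end

section
/- Let D, D' ∈ [0,1]^n be datasets whose entries are in nondecreasing (sorted) order. Then ∫_0^1 |r_D(q) − r_{D'}(q)| dq = Σ_{i=1}^n |D_i − D'_i|. -/
/-!
For sorted data the sets `{i | D i ≤ q}` and `{i | D' i ≤ q}` are initial segments of `Fin n`,
hence nested, so the summands `1[D i ≤ q] - 1[D' i ≤ q]` of `r_D q - r_{D'} q` all have the same
sign and the absolute value can be taken termwise. The `i`-th term is then, in absolute value, the
indicator of `[min (D i) (D' i), max (D i) (D' i))`, whose length is `|D i - D' i|`.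
-/

open MeasureTheory

open Set

theorem Finset.abs_sum_of_nonneg_or_nonpos {ι G : Type*} [AddCommGroup G] [LinearOrder G]
    [IsOrderedAddMonoid G] {s : Finset ι} {f : ι → G}
    (hf : (∀ i ∈ s, 0 ≤ f i) ∨ ∀ i ∈ s, f i ≤ 0) :
    |∑ i ∈ s, f i| = ∑ i ∈ s, |f i| := by
  rcases hf with hf | hf
  · rw [Finset.abs_sum_of_nonneg hf]
    exact Finset.sum_congr rfl fun i hi => (abs_of_nonneg (hf i hi)).symm
  · rw [abs_of_nonpos (Finset.sum_nonpos hf), ← Finset.sum_neg_distrib]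
    exact Finset.sum_congr rfl fun i hi => (abs_of_nonpos (hf i hi)).symm

theorem ofReal_abs_ite_le_sub_ite_le (a b q : ℝ) :
    ENNReal.ofReal |(if a ≤ q then (1 : ℝ) else 0) - if b ≤ q then 1 else 0| =
      (Ico (min a b) (max a b)).indicator 1 q := by
  simp only [indicator, mem_Ico, min_le_iff, lt_max_iff]
  split_ifs <;> norm_num <;> grind

theorem setLIntegral_indicator_Ico_min_max {s : Set ℝ} [s.OrdConnected] {a b : ℝ}
    (ha : a ∈ s) (hb : b ∈ s) :
    ∫⁻ q in s, (Ico (min a b) (max a b)).indicator 1 q = ENNReal.ofReal |a - b| := by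
  have hsub : Ico (min a b) (max a b) ⊆ s :=
    Ico_subset_Icc_self.trans (OrdConnected.uIcc_subset ‹_› ha hb)
  rw [lintegral_indicator_one measurableSet_Ico, Measure.restrict_apply measurableSet_Ico,
    inter_eq_left.mpr hsub, Real.volume_Ico, max_sub_min_eq_abs, abs_sub_comm]

theorem abs_rank_sub_rank_of_monotone {n : ℕ} {D D' : Fin n → ℝ} (hD : Monotone D)
    (hD' : Monotone D') (q : ℝ) :
    |rank D q - rank D' q| =
      ∑ i, |(if D i ≤ q then (1 : ℝ) else 0) - if D' i ≤ q then 1 else 0| := by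
  rw [rank, rank, ← Finset.sum_sub_distrib]
  refine Finset.abs_sum_of_nonneg_or_nonpos ?_
  by_contra! ⟨⟨i, -, hi⟩, ⟨j, -, hj⟩⟩
  obtain ⟨hD'i, hDi⟩ : D' i ≤ q ∧ ¬D i ≤ q := by
    split_ifs at hi <;> norm_num at hi; exact ⟨‹_›, ‹_›⟩
  obtain ⟨hDj, hD'j⟩ : D j ≤ q ∧ ¬D' j ≤ q := by
    split_ifs at hj <;> norm_num at hj; exact ⟨‹_›, ‹_›⟩
  rcases le_total i j with hij | hij
  · exact hDi ((hD hij).trans hDj)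
  · exact hD'j ((hD' hij).trans hD'i)

/-- for sorted datasets, the 1-norm distance between rank functions
equals the sum of coordinate-wise distances between the datasets. -/
theorem stmt_15 (n : ℕ) (D D' : Fin n → ℝ)
    (hD : ∀ i, D i ∈ Set.Icc (0 : ℝ) 1) (hD' : ∀ i, D' i ∈ Set.Icc (0 : ℝ) 1)
    (hmono : Monotone D) (hmono' : Monotone D') :
    ∫⁻ q in Set.Icc (0 : ℝ) 1, ENNReal.ofReal |rank D q - rank D' q| =
      ENNReal.ofReal (∑ i, |D i - D' i|) := by
  calc ∫⁻ q in Icc (0 : ℝ) 1, ENNReal.ofReal |rank D q - rank D' q|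
      = ∫⁻ q in Icc (0 : ℝ) 1,
          ∑ i, (Ico (min (D i) (D' i)) (max (D i) (D' i))).indicator 1 q := by
        simp_rw [abs_rank_sub_rank_of_monotone hmono hmono',
          ENNReal.ofReal_sum_of_nonneg fun i _ => abs_nonneg _, ofReal_abs_ite_le_sub_ite_le]
    _ = ∑ i, ∫⁻ q in Icc (0 : ℝ) 1,
          (Ico (min (D i) (D' i)) (max (D i) (D' i))).indicator 1 q :=
        lintegral_finsetSum _ fun i _ => measurable_const.indicator measurableSet_Ico
    _ = ENNReal.ofReal (∑ i, |D i - D' i|) := by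
        simp_rw [setLIntegral_indicator_Ico_min_max (hD _) (hD' _)]
        exact (ENNReal.ofReal_sum_of_nonneg fun i _ => abs_nonneg _).symm
end

section
/- Let D, D' ∈ [0,1]^n be 1-dimensional datasets of size n and ε ≥ 0 a real number such that |D_i − D'_i| ≤ ε/n for all i ∈ [n]. Then ∫_{Q_c} |c_D(q) − c_{D'}(q)| dq ≤ 2ε. -/
open MeasureTheory

/-!
A query interval `[c, c + r]` separates two points `a` and `b` only if one of its endpoints
lies between them. So `|c_D - c_{D'}|` is bounded by the sum over `i` of the number of
endpoints of the query in `uIcc (D i) (D' i)`. For fixed `r`, each endpoint sweeps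
`uIcc (D i) (D' i)` on a set of `c` of measure `|D i - D' i|`; enlarging `Q_c` to
`ℝ × [0, 1]` and integrating over `r` gives at most `2 ∑ |D i - D' i| ≤ 2ε`.
-/

open Set ENNReal

lemma mem_uIcc_left_or_right_of_mem_Icc_of_notMem {a b c d : ℝ} (ha : a ∈ Icc c d)
    (hb : b ∉ Icc c d) : c ∈ uIcc a b ∨ d ∈ uIcc a b := by
  rw [mem_Icc, not_and_or, not_le, not_le] at hb
  rcases hb with hb | hb
  · exact Or.inl (mem_uIcc.2 (Or.inr ⟨hb.le, ha.1⟩))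
  · exact Or.inr (mem_uIcc.2 (Or.inl ⟨ha.2, hb.le⟩))

noncomputable def endpointCount (a b : ℝ) (q : ℝ × ℝ) : ℝ≥0∞ :=
  (uIcc a b).indicator 1 q.1 + (uIcc a b).indicator 1 (q.1 + q.2)

lemma endpointCount_comm (a b : ℝ) : endpointCount a b = endpointCount b a := by
  funext q
  simp only [endpointCount, uIcc_comm]

lemma one_le_endpointCount {a b : ℝ} {q : ℝ × ℝ} (ha : a ∈ Icc q.1 (q.1 + q.2))
    (hb : b ∉ Icc q.1 (q.1 + q.2)) : 1 ≤ endpointCount a b q := by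
  rcases mem_uIcc_left_or_right_of_mem_Icc_of_notMem ha hb with h | h
  · exact (indicator_of_mem h 1).symm.le.trans le_self_add
  · exact (indicator_of_mem h 1).symm.le.trans le_add_self

lemma ofReal_abs_indicator_sub_le_endpointCount (a b : ℝ) (q : ℝ × ℝ) :
    ENNReal.ofReal |(Icc q.1 (q.1 + q.2)).indicator 1 a - (Icc q.1 (q.1 + q.2)).indicator 1 b|
      ≤ endpointCount a b q := by
  by_cases ha : a ∈ Icc q.1 (q.1 + q.2) <;> by_cases hb : b ∈ Icc q.1 (q.1 + q.2)
  · simp [ha, hb]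
  · simpa [ha, hb] using one_le_endpointCount ha hb
  · simpa [ha, hb, endpointCount_comm a b] using one_le_endpointCount hb ha
  · simp [ha, hb]

lemma cardF1_eq_sum_indicator {n : ℕ} (D : Fin n → ℝ) (q : ℝ × ℝ) :
    cardF1 D q = ∑ i, (Icc q.1 (q.1 + q.2)).indicator 1 (D i) := by
  simp only [cardF1, indicator_apply, mem_Icc, Pi.one_apply]

lemma ofReal_abs_cardF1_sub_le {n : ℕ} (D D' : Fin n → ℝ) (q : ℝ × ℝ) :
    ENNReal.ofReal |cardF1 D q - cardF1 D' q| ≤ ∑ i, endpointCount (D i) (D' i) q := by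
  rw [cardF1_eq_sum_indicator, cardF1_eq_sum_indicator, ← Finset.sum_sub_distrib]
  calc ENNReal.ofReal |∑ i, _|
      ≤ ENNReal.ofReal (∑ i, |(Icc q.1 (q.1 + q.2)).indicator 1 (D i)
          - (Icc q.1 (q.1 + q.2)).indicator 1 (D' i)|) :=
        ENNReal.ofReal_le_ofReal (Finset.abs_sum_le_sum_abs _ _)
    _ = ∑ i, ENNReal.ofReal |(Icc q.1 (q.1 + q.2)).indicator 1 (D i)
          - (Icc q.1 (q.1 + q.2)).indicator 1 (D' i)| :=
        ENNReal.ofReal_sum_of_nonneg fun _ _ ↦ abs_nonneg _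
    _ ≤ ∑ i, endpointCount (D i) (D' i) q :=
        Finset.sum_le_sum fun i _ ↦ ofReal_abs_indicator_sub_le_endpointCount _ _ q

lemma measurable_endpointCount (a b : ℝ) : Measurable (endpointCount a b) := by
  have hind : Measurable ((uIcc a b).indicator (1 : ℝ → ℝ≥0∞)) :=
    measurable_one.indicator measurableSet_uIcc
  exact (hind.comp measurable_fst).add (hind.comp (measurable_fst.add measurable_snd))

lemma lintegral_endpointCount_fst (a b r : ℝ) :
    ∫⁻ c, endpointCount a b (c, r) = 2 * ENNReal.ofReal |a - b| := by
  simp only [endpointCount]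
  rw [lintegral_add_left (measurable_one.indicator measurableSet_uIcc),
    lintegral_add_right_eq_self (f := (uIcc a b).indicator 1), lintegral_indicator_one
    measurableSet_uIcc, Real.volume_interval, abs_sub_comm, two_mul]

lemma setLIntegral_univ_prod_endpointCount (a b : ℝ) (s : Set ℝ) :
    ∫⁻ q in univ ×ˢ s, endpointCount a b q = volume s * (2 * ENNReal.ofReal |a - b|) := by
  rw [Measure.volume_eq_prod, ← Measure.prod_restrict, Measure.restrict_univ,
    lintegral_prod_symm _ (measurable_endpointCount a b).aemeasurable]
  simp only [lintegral_endpointCount_fst, setLIntegral_const, mul_comm]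

theorem stmt_16_general (n : ℕ) (hn : 0 < n) (ε : ℝ) (D D' : Fin n → ℝ)
    (hclose : ∀ i, |D i - D' i| ≤ ε / n) :
    ∫⁻ q in Qc1, ENNReal.ofReal |cardF1 D q - cardF1 D' q| ≤
      ENNReal.ofReal (2 * ε) := by
  calc ∫⁻ q in Qc1, ENNReal.ofReal |cardF1 D q - cardF1 D' q|
      ≤ ∫⁻ q in univ ×ˢ Icc 0 1, ENNReal.ofReal |cardF1 D q - cardF1 D' q| :=
        lintegral_mono_set fun q hq ↦ ⟨mem_univ _, hq.1⟩
    _ ≤ ∫⁻ q in univ ×ˢ Icc 0 1, ∑ i, endpointCount (D i) (D' i) q :=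
        lintegral_mono fun q ↦ ofReal_abs_cardF1_sub_le D D' q
    _ = ∑ i, 2 * ENNReal.ofReal |D i - D' i| := by
        rw [lintegral_finsetSum _ fun i _ ↦ measurable_endpointCount _ _]
        simp [setLIntegral_univ_prod_endpointCount]
    _ ≤ ∑ _i : Fin n, 2 * ENNReal.ofReal (ε / n) := by
        gcongr with i
        exact hclose i
    _ = ENNReal.ofReal (2 * ε) := by
        rw [Finset.sum_const, Finset.card_univ, Fintype.card_fin, nsmul_eq_mul,
          ← ofReal_natCast, ← ofReal_ofNat 2, ← ofReal_mul (by norm_num),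
          ← ofReal_mul (Nat.cast_nonneg n), mul_left_comm, mul_div_cancel₀ _ (by positivity)]

/-- if two 1-dimensional datasets are coordinatewise within `ε/n`,
their cardinality functions are within `2ε` in 1-norm. -/
theorem stmt_16 (n : ℕ) (hn : 0 < n) (ε : ℝ) (hε : 0 ≤ ε) (D D' : Fin n → ℝ)
    (hD : ∀ i, D i ∈ Set.Icc (0 : ℝ) 1) (hD' : ∀ i, D' i ∈ Set.Icc (0 : ℝ) 1)
    (hclose : ∀ i, |D i - D' i| ≤ ε / n) :
    ∫⁻ q in Qc1, ENNReal.ofReal |cardF1 D q - cardF1 D' q| ≤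
      ENNReal.ofReal (2 * ε) :=
  stmt_16_general n hn ε D D' hclose
end

section
/- Let D ∈ [0,1]^n be a 1-dimensional dataset and let m¹, m² ∈ {0,1}^n be mask vectors. For j ∈ {1,2}, define the masked cardinality function c_{D^j}(c, r) = Σ_{i=1}^n m^j_i · 1[c ≤ D_i ≤ c + r] on the query domain Q_c. Then ∫_{Q_c} |c_{D¹}(q) − c_{D²}(q)| dq ≤ (1/2)·Σ_{i=1}^n |m¹_i − m²_i|. -/
/-!
By linearity `c_{D¹} - c_{D²}` is the masked cardinality function of the mask `m¹ - m²`, so by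
the triangle inequality its absolute value at a query `q` is at most the sum of
`|m¹ᵢ - m²ᵢ|` over the records `Dᵢ` that `q` hits. Integrating, each record `x` contributes
`|m¹ᵢ - m²ᵢ|` times the area of the queries in `Q_c` hitting it, and these lie in the triangle
`{(c, r) : 0 ≤ r ≤ 1, x - r ≤ c ≤ x}` of area `1/2`.
-/

open MeasureTheory

/-- The masked cardinality function of a 1-dimensional dataset `D` with mask `m`:
`c_{D^m}(c, r) = Σ_i m_i · 1[c ≤ D_i ≤ c + r]`. -/
noncomputable def maskedCardF1 {n : ℕ} (D : Fin n → ℝ) (m : Fin n → ℝ)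
    (q : ℝ × ℝ) : ℝ :=
  ∑ i, m i * (if q.1 ≤ D i ∧ D i ≤ q.1 + q.2 then 1 else 0)

open Set

def rangeHits (x : ℝ) : Set (ℝ × ℝ) := {q | q.1 ≤ x ∧ x ≤ q.1 + q.2}

lemma measurableSet_rangeHits (x : ℝ) : MeasurableSet (rangeHits x) :=
  (measurableSet_le measurable_fst measurable_const).inter
    (measurableSet_le measurable_const (measurable_fst.add measurable_snd))

lemma volume_rangeHits_inter_snd_mem_Icc (x : ℝ) :
    volume (rangeHits x ∩ Prod.snd ⁻¹' Icc 0 1) = ENNReal.ofReal (1 / 2) := by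
  have hfiber : ∀ r : ℝ, volume ((fun c => (c, r)) ⁻¹' (rangeHits x ∩ Prod.snd ⁻¹' Icc 0 1)) =
      (Icc 0 1).indicator ENNReal.ofReal r := by
    intro r
    by_cases hr : r ∈ Icc (0 : ℝ) 1
    · have hslice : (fun c => (c, r)) ⁻¹' (rangeHits x ∩ Prod.snd ⁻¹' Icc 0 1) = Icc (x - r) x := by
        ext c
        simp only [rangeHits, mem_preimage, mem_inter_iff, mem_ofPred_eq, mem_Icc]
        constructor
        · rintro ⟨⟨h₁, h₂⟩, -⟩; exact ⟨by linarith, h₁⟩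
        · rintro ⟨h₁, h₂⟩; exact ⟨⟨h₂, by linarith⟩, hr⟩
      rw [hslice, Real.volume_Icc, indicator_of_mem hr, sub_sub_cancel]
    · have hslice : (fun c => (c, r)) ⁻¹' (rangeHits x ∩ Prod.snd ⁻¹' Icc 0 1) = ∅ :=
        eq_empty_of_forall_notMem fun c hc => hr hc.2
      rw [hslice, measure_empty, indicator_of_notMem hr]
  rw [Measure.volume_eq_prod, Measure.prod_apply_symm
      ((measurableSet_rangeHits x).inter (measurableSet_Icc.preimage measurable_snd))]
  simp_rw [hfiber]
  rw [lintegral_indicator measurableSet_Icc, ← ofReal_integral_eq_lintegral_ofReal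
      (continuous_id'.integrableOn_Icc (a := (0 : ℝ)) (b := 1))
      (ae_restrict_of_forall_mem measurableSet_Icc fun r hr => hr.1),
    integral_Icc_eq_integral_Ioc, ← intervalIntegral.integral_of_le zero_le_one, integral_id]
  norm_num

lemma volume_rangeHits_inter_Qc1_le (x : ℝ) :
    volume (rangeHits x ∩ Qc1) ≤ ENNReal.ofReal (1 / 2) :=
  volume_rangeHits_inter_snd_mem_Icc x ▸ measure_mono (inter_subset_inter_right _ fun _ hq => hq.1)

lemma maskedCardF1_sub {n : ℕ} (D m₁ m₂ : Fin n → ℝ) (q : ℝ × ℝ) :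
    maskedCardF1 D m₁ q - maskedCardF1 D m₂ q = maskedCardF1 D (m₁ - m₂) q := by
  simp only [maskedCardF1, ← Finset.sum_sub_distrib, Pi.sub_apply, sub_mul]

lemma ofReal_abs_maskedCardF1_le {n : ℕ} (D m : Fin n → ℝ) (q : ℝ × ℝ) :
    ENNReal.ofReal |maskedCardF1 D m q| ≤
      ∑ i, (rangeHits (D i)).indicator (fun _ => ENNReal.ofReal |m i|) q := by
  calc ENNReal.ofReal |maskedCardF1 D m q|
      ≤ ENNReal.ofReal (∑ i, |m i * if q.1 ≤ D i ∧ D i ≤ q.1 + q.2 then 1 else 0|) :=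
        ENNReal.ofReal_le_ofReal (Finset.abs_sum_le_sum_abs _ _)
    _ = ∑ i, (rangeHits (D i)).indicator (fun _ => ENNReal.ofReal |m i|) q := by
        rw [ENNReal.ofReal_sum_of_nonneg fun i _ => abs_nonneg _]
        refine Finset.sum_congr rfl fun i _ => ?_
        by_cases hq : q ∈ rangeHits (D i)
        · rw [indicator_of_mem hq, if_pos (by exact hq), mul_one]
        · rw [indicator_of_notMem hq, if_neg (by exact hq), mul_zero, abs_zero, ENNReal.ofReal_zero]

lemma setLIntegral_Qc1_ofReal_abs_maskedCardF1_le {n : ℕ} (D m : Fin n → ℝ) :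
    ∫⁻ q in Qc1, ENNReal.ofReal |maskedCardF1 D m q| ≤ ENNReal.ofReal ((1 / 2) * ∑ i, |m i|) := by
  calc ∫⁻ q in Qc1, ENNReal.ofReal |maskedCardF1 D m q|
      ≤ ∫⁻ q in Qc1, ∑ i, (rangeHits (D i)).indicator (fun _ => ENNReal.ofReal |m i|) q :=
        lintegral_mono (ofReal_abs_maskedCardF1_le D m)
    _ = ∑ i, ENNReal.ofReal |m i| * volume (rangeHits (D i) ∩ Qc1) := by
        rw [lintegral_finsetSum _ fun i _ =>
          measurable_const.indicator (measurableSet_rangeHits (D i))]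
        simp only [lintegral_indicator_const (measurableSet_rangeHits _),
          Measure.restrict_apply (measurableSet_rangeHits _)]
    _ ≤ ∑ i, ENNReal.ofReal |m i| * ENNReal.ofReal (1 / 2) := by
        gcongr with i; exact volume_rangeHits_inter_Qc1_le (D i)
    _ = ENNReal.ofReal ((1 / 2) * ∑ i, |m i|) := by
        rw [mul_comm, ENNReal.ofReal_mul' (by norm_num),
          ENNReal.ofReal_sum_of_nonneg fun i _ => abs_nonneg _, Finset.sum_mul]

theorem stmt_17_general (n : ℕ) (D : Fin n → ℝ)
    (m₁ m₂ : Fin n → ℝ) :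
    ∫⁻ q in Qc1, ENNReal.ofReal |maskedCardF1 D m₁ q - maskedCardF1 D m₂ q| ≤
      ENNReal.ofReal ((1 / 2) * ∑ i, |m₁ i - m₂ i|) := by
  simpa only [maskedCardF1_sub, Pi.sub_apply] using
    setLIntegral_Qc1_ofReal_abs_maskedCardF1_le D (m₁ - m₂)

/-- the 1-norm distance between the cardinality functions of two masked
versions of a dataset is at most half the Hamming distance between the masks. -/
theorem stmt_17 (n : ℕ) (D : Fin n → ℝ) (hD : ∀ i, D i ∈ Set.Icc (0 : ℝ) 1)
    (m₁ m₂ : Fin n → ℝ)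
    (hm₁ : ∀ i, m₁ i = 0 ∨ m₁ i = 1) (hm₂ : ∀ i, m₂ i = 0 ∨ m₂ i = 1) :
    ∫⁻ q in Qc1, ENNReal.ofReal |maskedCardF1 D m₁ q - maskedCardF1 D m₂ q| ≤
      ENNReal.ofReal ((1 / 2) * ∑ i, |m₁ i - m₂ i|) :=
  stmt_17_general n D m₁ m₂
end

section
/- Let μ be a Borel probability measure on [0,1] and let D, D' ∈ [0,1]^n be datasets whose entries are in nondecreasing (sorted) order. Then ∫_{[0,1]} |r_D(q) − r_{D'}(q)| dμ(q) = Σ_{i=1}^n μ([min(D_i, D'_i), max(D_i, D'_i))), where [a, b) denotes the half-open interval from a to b. -/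
/-!
For sorted datasets the rank difference has a constant sign in each `q`: if `D'ᵢ ≤ q < Dᵢ` and
`Dⱼ ≤ q < D'ⱼ`, comparing `i` with `j` contradicts monotonicity of `D` or of `D'`. Hence
`|r_D(q) - r_{D'}(q)| = Σᵢ |1[Dᵢ ≤ q] - 1[D'ᵢ ≤ q]|`, and the `i`-th summand is the indicator of
`[min Dᵢ D'ᵢ, max Dᵢ D'ᵢ)`. Integrating termwise gives the measures of these intervals, which all
lie in `[0,1]`.
-/

open MeasureTheory

open Finset

theorem Finset.abs_sum_eq_sum_abs_of_nonneg_or_nonpos {ι G : Type*} [AddCommGroup G]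
    [LinearOrder G] [IsOrderedAddMonoid G] {s : Finset ι} {f : ι → G}
    (h : (∀ i ∈ s, 0 ≤ f i) ∨ ∀ i ∈ s, f i ≤ 0) :
    |∑ i ∈ s, f i| = ∑ i ∈ s, |f i| := by
  rcases h with h | h
  · rw [abs_sum_of_nonneg h]
    exact sum_congr rfl fun i hi => (abs_of_nonneg (h i hi)).symm
  · rw [← abs_neg, ← sum_neg_distrib, abs_sum_of_nonneg fun i hi => neg_nonneg.2 (h i hi)]
    exact sum_congr rfl fun i hi => (abs_of_nonpos (h i hi)).symm

theorem Monotone.forall_le_imp_or_forall_le_imp {ι α : Type*} [LinearOrder ι] [Preorder α]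
    {D D' : ι → α} (hD : Monotone D) (hD' : Monotone D') (q : α) :
    (∀ i, D' i ≤ q → D i ≤ q) ∨ ∀ i, D i ≤ q → D' i ≤ q := by
  by_contra! ⟨⟨i, hi', hi⟩, ⟨j, hj, hj'⟩⟩
  rcases le_total i j with hij | hji
  · exact hi ((hD hij).trans hj)
  · exact hj' ((hD' hji).trans hi')

theorem abs_ite_le_sub_ite_le {α : Type*} [LinearOrder α] (a b q : α) :
    |((if a ≤ q then 1 else 0 : ℝ) - if b ≤ q then 1 else 0)| =
      (Set.Ico (min a b) (max a b)).indicator 1 q := by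
  by_cases ha : a ≤ q <;> by_cases hb : b ≤ q <;> simp [Set.indicator, not_le.1, *]

theorem abs_rank_sub_rank {n : ℕ} {D D' : Fin n → ℝ} (hD : Monotone D) (hD' : Monotone D')
    (q : ℝ) :
    |rank D q - rank D' q| = ∑ i, (Set.Ico (min (D i) (D' i)) (max (D i) (D' i))).indicator 1 q := by
  have hsign := hD.forall_le_imp_or_forall_le_imp hD' q
  rw [rank, rank, ← sum_sub_distrib, abs_sum_eq_sum_abs_of_nonneg_or_nonpos]
  · exact sum_congr rfl fun i _ => abs_ite_le_sub_ite_le (D i) (D' i) q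
  · refine hsign.imp (fun h i _ => ?_) (fun h i _ => ?_) <;> split_ifs <;> simp_all

theorem stmt_19_general (μ : Measure ℝ)
    (n : ℕ) (D D' : Fin n → ℝ)
    (hD : ∀ i, D i ∈ Set.Icc (0 : ℝ) 1) (hD' : ∀ i, D' i ∈ Set.Icc (0 : ℝ) 1)
    (hmono : Monotone D) (hmono' : Monotone D') :
    ∫⁻ q in Set.Icc (0 : ℝ) 1, ENNReal.ofReal |rank D q - rank D' q| ∂μ =
      ∑ i, μ (Set.Ico (min (D i) (D' i)) (max (D i) (D' i))) := by
  have hpoint : ∀ q, ENNReal.ofReal |rank D q - rank D' q| =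
      ∑ i, (Set.Ico (min (D i) (D' i)) (max (D i) (D' i))).indicator 1 q := fun q => by
    rw [abs_rank_sub_rank hmono hmono', ENNReal.ofReal_sum_of_nonneg fun i _ =>
      Set.indicator_nonneg (f := 1) (fun _ _ => zero_le_one) q]
    exact sum_congr rfl fun i _ => by simp [Set.indicator_apply, apply_ite ENNReal.ofReal]
  simp_rw [hpoint]
  rw [lintegral_finsetSum _ fun i _ => measurable_one.indicator measurableSet_Ico]
  refine sum_congr rfl fun i _ => ?_
  have hsub : Set.Ico (min (D i) (D' i)) (max (D i) (D' i)) ⊆ Set.Icc 0 1 :=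
    Set.Ico_subset_Icc_self.trans
      (Set.Icc_subset_Icc (le_min (hD i).1 (hD' i).1) (max_le (hD i).2 (hD' i).2))
  rw [lintegral_indicator_one measurableSet_Ico, Measure.restrict_apply measurableSet_Ico,
    Set.inter_eq_self_of_subset_left hsub]

/-- for sorted datasets and a Borel probability measure `μ` on `[0,1]`,
the μ-norm distance between rank functions equals the sum of the μ-measures of the
half-open intervals between corresponding data points. -/
theorem stmt_19 (μ : Measure ℝ) [IsProbabilityMeasure μ]
    (hsupp : μ (Set.Icc (0 : ℝ) 1)ᶜ = 0)
    (n : ℕ) (D D' : Fin n → ℝ)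
    (hD : ∀ i, D i ∈ Set.Icc (0 : ℝ) 1) (hD' : ∀ i, D' i ∈ Set.Icc (0 : ℝ) 1)
    (hmono : Monotone D) (hmono' : Monotone D') :
    ∫⁻ q in Set.Icc (0 : ℝ) 1, ENNReal.ofReal |rank D q - rank D' q| ∂μ =
      ∑ i, μ (Set.Ico (min (D i) (D' i)) (max (D i) (D' i))) :=
  stmt_19_general μ n D D' hD hD' hmono hmono'
end
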